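/- In the deterministicUSM algorithm (Algorithm: two sequences X_i, Y_i with X_0 = ∅, Y_0 = Ω, where at step i item u_i is added to X if a_i := f(X_{i−1}∪{u_i}) − f(X_{i−1}) ≥ b_i := f(Y_{i−1}\{u_i}) − f(Y_{i−1}), and otherwise removed from Y), for every step i of the algorithm applied to a submodular function f, a_i + b_i ≥ 0. -/
import Mathlib

theorem deterministicUSM_step_sum_nonneg
    {Ω : Type*} [Fintype Ω] [DecidableEq Ω]
    (f : Finset Ω → ℝ)
    (hf : ∀ A B : Finset Ω, f (A ∪ B) + f (A ∩ B) ≤ f A + f B)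
    (X Y : Finset Ω) (u : Ω)
    (hXY : X ⊆ Y) (huY : u ∈ Y) (huX : u ∉ X) :
    (f (insert u X) - f X) + (f (Y.erase u) - f Y) ≥ 0 := by
  have h := hf (insert u X) (Y.erase u)
  have hU : insert u X ∪ Y.erase u = Y := by
    ext x
    simp only [Finset.mem_union, Finset.mem_insert, Finset.mem_erase]
    constructor
    · rintro ((rfl | hx) | ⟨_, hx⟩)
      · exact huY
      · exact hXY hx
      · exact hx
    · intro hx
      by_cases hxu : x = u
      · exact Or.inl (Or.inl hxu)
      · exact Or.inr ⟨hxu, hx⟩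
  have hI : insert u X ∩ Y.erase u = X := by
    ext x
    simp only [Finset.mem_inter, Finset.mem_insert, Finset.mem_erase]
    constructor
    · rintro ⟨rfl | hx, hne, _⟩
      · exact absurd rfl hne
      · exact hx
    · intro hx
      exact ⟨Or.inr hx, fun h => huX (h ▸ hx), hXY hx⟩
  rw [hU, hI] at h
  linarith
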